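/- Let u : I × ℝⁿ → S^l be a smooth solution of the biharmonic wave map equation (∂_t² + Δ²)u ⊥ T_u S^l. Then for every skew-symmetric Λ ∈ ℝ^{(l+1)×(l+1)}, u satisfies the conservation law ∂_t⟨∂_t u, Λu⟩ + Δ⟨Δu, Λu⟩ - 2 Σ_i ∂_i⟨Δu, Λ∂_i u⟩ = 0 pointwise on I × ℝⁿ. -/

import Mathlib

open scoped InnerProductSpace

/-- `i`-th spatial partial derivative. -/
noncomputable def pd {n : ℕ} {F : Type*} [NormedAddCommGroup F] [NormedSpace ℝ F]
    (u : EuclideanSpace ℝ (Fin n) → F) (i : Fin n) (x : EuclideanSpace ℝ (Fin n)) : F :=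
  fderiv ℝ u x (EuclideanSpace.single i 1)

/-- Spatial Laplacian `Δu x = ∑ i, ∂_i ∂_i u x`. -/
noncomputable def lap {n : ℕ} {F : Type*} [NormedAddCommGroup F] [NormedSpace ℝ F]
    (u : EuclideanSpace ℝ (Fin n) → F) (x : EuclideanSpace ℝ (Fin n)) : F :=
  ∑ i, pd (pd u i) i x

/-- Time derivative `∂_t u`. -/
noncomputable def ut {n : ℕ} {F : Type*} [NormedAddCommGroup F] [NormedSpace ℝ F]
    (u : ℝ → EuclideanSpace ℝ (Fin n) → F) (t : ℝ) (x : EuclideanSpace ℝ (Fin n)) : F :=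
  deriv (fun s => u s x) t

/-- Second time derivative `∂_t² u`. -/
noncomputable def utt {n : ℕ} {F : Type*} [NormedAddCommGroup F] [NormedSpace ℝ F]
    (u : ℝ → EuclideanSpace ℝ (Fin n) → F) (t : ℝ) (x : EuclideanSpace ℝ (Fin n)) : F :=
  deriv (fun s => ut u s x) t

section Aux

variable {n : ℕ} {F : Type*} [NormedAddCommGroup F] [NormedSpace ℝ F]

/-- Directional derivative operator on jointly defined functions on `ℝ × ℝⁿ`. -/
noncomputable def DD (v : ℝ × EuclideanSpace ℝ (Fin n))
    (V : ℝ × EuclideanSpace ℝ (Fin n) → F) (p : ℝ × EuclideanSpace ℝ (Fin n)) : F :=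
  fderiv ℝ V p v

/-- The `i`-th spatial coordinate direction in `ℝ × ℝⁿ`. -/
noncomputable def ee (i : Fin n) : ℝ × EuclideanSpace ℝ (Fin n) :=
  ((0 : ℝ), EuclideanSpace.single i 1)

/-- The joint Laplacian operator, built from `DD`. -/
noncomputable def Lp (V : ℝ × EuclideanSpace ℝ (Fin n) → F)
    (p : ℝ × EuclideanSpace ℝ (Fin n)) : F :=
  ∑ i, DD (ee i) (DD (ee i) V) p

theorem DD_contDiff {v : ℝ × EuclideanSpace ℝ (Fin n)}
    {V : ℝ × EuclideanSpace ℝ (Fin n) → F} (hV : ContDiff ℝ (⊤ : ℕ∞) V) :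
    ContDiff ℝ (⊤ : ℕ∞) (DD v V) :=
  (hV.fderiv_right (by simp)).clm_apply contDiff_const

theorem Lp_contDiff {V : ℝ × EuclideanSpace ℝ (Fin n) → F} (hV : ContDiff ℝ (⊤ : ℕ∞) V) :
    ContDiff ℝ (⊤ : ℕ∞) (Lp V) :=
  ContDiff.sum fun _ _ => DD_contDiff (DD_contDiff hV)

theorem hasDerivAt_slice {V : ℝ × EuclideanSpace ℝ (Fin n) → F} (hV : ContDiff ℝ (⊤ : ℕ∞) V)
    (t : ℝ) (x : EuclideanSpace ℝ (Fin n)) :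
    HasDerivAt (fun s => V (s, x)) (DD ((1 : ℝ), (0 : EuclideanSpace ℝ (Fin n))) V (t, x)) t := by
  have h1 : HasFDerivAt V (fderiv ℝ V (t, x)) (t, x) :=
    (hV.differentiable (by simp) (t, x)).hasFDerivAt
  have h2 : HasDerivAt (fun s : ℝ => (s, x)) ((1 : ℝ), (0 : EuclideanSpace ℝ (Fin n))) t :=
    HasDerivAt.prodMk (hasDerivAt_id t) (hasDerivAt_const t x)
  exact h1.comp_hasDerivAt t h2

theorem hasFDerivAt_slice {V : ℝ × EuclideanSpace ℝ (Fin n) → F} (hV : ContDiff ℝ (⊤ : ℕ∞) V)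
    (t : ℝ) (x : EuclideanSpace ℝ (Fin n)) :
    HasFDerivAt (fun y => V (t, y))
      ((fderiv ℝ V (t, x)).comp
        ((0 : EuclideanSpace ℝ (Fin n) →L[ℝ] ℝ).prod
          (ContinuousLinearMap.id ℝ (EuclideanSpace ℝ (Fin n))))) x := by
  have h1 : HasFDerivAt V (fderiv ℝ V (t, x)) (t, x) :=
    (hV.differentiable (by simp) (t, x)).hasFDerivAt
  have h2 : HasFDerivAt (fun y : EuclideanSpace ℝ (Fin n) => (t, y))
      ((0 : EuclideanSpace ℝ (Fin n) →L[ℝ] ℝ).prod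
        (ContinuousLinearMap.id ℝ (EuclideanSpace ℝ (Fin n)))) x :=
    HasFDerivAt.prodMk (hasFDerivAt_const t x) (hasFDerivAt_id x)
  exact h1.comp x h2

theorem pd_slice {V : ℝ × EuclideanSpace ℝ (Fin n) → F} (hV : ContDiff ℝ (⊤ : ℕ∞) V)
    (t : ℝ) (i : Fin n) (x : EuclideanSpace ℝ (Fin n)) :
    pd (fun y => V (t, y)) i x = DD (ee i) V (t, x) := by
  unfold pd
  rw [(hasFDerivAt_slice hV t x).fderiv]
  simp [DD, ee]

theorem deriv_slice {V : ℝ × EuclideanSpace ℝ (Fin n) → F} (hV : ContDiff ℝ (⊤ : ℕ∞) V)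
    (t : ℝ) (x : EuclideanSpace ℝ (Fin n)) :
    deriv (fun s => V (s, x)) t
      = DD ((1 : ℝ), (0 : EuclideanSpace ℝ (Fin n))) V (t, x) :=
  (hasDerivAt_slice hV t x).deriv

variable {H : Type*} [NormedAddCommGroup H] [InnerProductSpace ℝ H]

theorem deriv_inner_slice {V W : ℝ × EuclideanSpace ℝ (Fin n) → H}
    (hV : ContDiff ℝ (⊤ : ℕ∞) V) (hW : ContDiff ℝ (⊤ : ℕ∞) W) (L : H →L[ℝ] H)
    (t : ℝ) (x : EuclideanSpace ℝ (Fin n)) :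
    deriv (fun s => ⟪V (s, x), L (W (s, x))⟫_ℝ) t
      = ⟪DD ((1 : ℝ), (0 : EuclideanSpace ℝ (Fin n))) V (t, x), L (W (t, x))⟫_ℝ
        + ⟪V (t, x), L (DD ((1 : ℝ), (0 : EuclideanSpace ℝ (Fin n))) W (t, x))⟫_ℝ := by
  have h1 := hasDerivAt_slice hV t x
  have h2 : HasDerivAt (fun s => L (W (s, x)))
      (L (DD ((1 : ℝ), (0 : EuclideanSpace ℝ (Fin n))) W (t, x))) t :=
    L.hasFDerivAt.comp_hasDerivAt t (hasDerivAt_slice hW t x)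
  rw [(h1.inner ℝ h2).deriv, add_comm]

theorem pd_inner_slice {V W : ℝ × EuclideanSpace ℝ (Fin n) → H}
    (hV : ContDiff ℝ (⊤ : ℕ∞) V) (hW : ContDiff ℝ (⊤ : ℕ∞) W) (L : H →L[ℝ] H)
    (t : ℝ) (i : Fin n) (x : EuclideanSpace ℝ (Fin n)) :
    pd (fun y => ⟪V (t, y), L (W (t, y))⟫_ℝ) i x
      = ⟪DD (ee i) V (t, x), L (W (t, x))⟫_ℝ
        + ⟪V (t, x), L (DD (ee i) W (t, x))⟫_ℝ := by
  have h1 := hasFDerivAt_slice hV t x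
  have h2 : HasFDerivAt (fun y => L (W (t, y)))
      (L.comp ((fderiv ℝ W (t, x)).comp
        ((0 : EuclideanSpace ℝ (Fin n) →L[ℝ] ℝ).prod
          (ContinuousLinearMap.id ℝ (EuclideanSpace ℝ (Fin n)))))) x :=
    L.hasFDerivAt.comp x (hasFDerivAt_slice hW t x)
  unfold pd
  rw [(h1.inner ℝ h2).fderiv]
  simp [DD, ee, fderivInnerCLM_apply]
  ring

theorem pd_inner_add_slice {V W V' W' : ℝ × EuclideanSpace ℝ (Fin n) → H}
    (hV : ContDiff ℝ (⊤ : ℕ∞) V) (hW : ContDiff ℝ (⊤ : ℕ∞) W)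
    (hV' : ContDiff ℝ (⊤ : ℕ∞) V') (hW' : ContDiff ℝ (⊤ : ℕ∞) W') (L : H →L[ℝ] H)
    (t : ℝ) (i : Fin n) (x : EuclideanSpace ℝ (Fin n)) :
    pd (fun y => ⟪V (t, y), L (W (t, y))⟫_ℝ + ⟪V' (t, y), L (W' (t, y))⟫_ℝ) i x
      = (⟪DD (ee i) V (t, x), L (W (t, x))⟫_ℝ
          + ⟪V (t, x), L (DD (ee i) W (t, x))⟫_ℝ)
        + (⟪DD (ee i) V' (t, x), L (W' (t, x))⟫_ℝ
          + ⟪V' (t, x), L (DD (ee i) W' (t, x))⟫_ℝ) := by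
  have h1 := hasFDerivAt_slice hV t x
  have h2 : HasFDerivAt (fun y => L (W (t, y)))
      (L.comp ((fderiv ℝ W (t, x)).comp
        ((0 : EuclideanSpace ℝ (Fin n) →L[ℝ] ℝ).prod
          (ContinuousLinearMap.id ℝ (EuclideanSpace ℝ (Fin n)))))) x :=
    L.hasFDerivAt.comp x (hasFDerivAt_slice hW t x)
  have h3 := hasFDerivAt_slice hV' t x
  have h4 : HasFDerivAt (fun y => L (W' (t, y)))
      (L.comp ((fderiv ℝ W' (t, x)).comp
        ((0 : EuclideanSpace ℝ (Fin n) →L[ℝ] ℝ).prod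
          (ContinuousLinearMap.id ℝ (EuclideanSpace ℝ (Fin n)))))) x :=
    L.hasFDerivAt.comp x (hasFDerivAt_slice hW' t x)
  unfold pd
  have h5 : HasFDerivAt (fun y => ⟪V (t, y), L (W (t, y))⟫_ℝ + ⟪V' (t, y), L (W' (t, y))⟫_ℝ) _ x :=
    (h1.inner ℝ h2).add (h3.inner ℝ h4)
  rw [h5.fderiv]
  simp [DD, ee, fderivInnerCLM_apply]
  ring

end Aux

/-- A smooth sphere-valued solution of the geometric biharmonic wave map equation
`(∂_t² + Δ²)u ⊥ T_u S^l` satisfies, for every skew-symmetric `Λ`, the conservation law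
`∂_t⟨∂_t u, Λu⟩ + Δ⟨Δu, Λu⟩ - 2 Div⟨Δu, Λ∇u⟩ = 0` pointwise on `I × ℝⁿ`. -/
theorem stmt14 {n l : ℕ} (I : Set ℝ) (hI : ∃ a b : ℝ, I = Set.Ioo a b)
    (u : ℝ → EuclideanSpace ℝ (Fin n) → EuclideanSpace ℝ (Fin (l+1)))
    (hu : ContDiff ℝ (⊤ : ℕ∞) (fun p : ℝ × EuclideanSpace ℝ (Fin n) => u p.1 p.2))
    (hsph : ∀ t ∈ I, ∀ x, ‖u t x‖ = 1)
    (hperp : ∀ t ∈ I, ∀ x, ∃ c : ℝ, utt u t x + lap (lap (u t)) x = c • u t x)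
    (Λ : EuclideanSpace ℝ (Fin (l+1)) →ₗ[ℝ] EuclideanSpace ℝ (Fin (l+1)))
    (hΛ : ∀ a b, ⟪Λ a, b⟫_ℝ = -⟪a, Λ b⟫_ℝ) :
    ∀ t ∈ I, ∀ x,
      deriv (fun s => ⟪ut u s x, Λ (u s x)⟫_ℝ) t
      + lap (fun y => ⟪lap (u t) y, Λ (u t y)⟫_ℝ) x
      - 2 * ∑ i, pd (fun y => ⟪lap (u t) y, Λ (pd (u t) i y)⟫_ℝ) i x = 0 := by
  intro t ht x
  set U : ℝ × EuclideanSpace ℝ (Fin n) → EuclideanSpace ℝ (Fin (l+1)) :=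
    fun p => u p.1 p.2 with hUdef
  have hU : ContDiff ℝ (⊤ : ℕ∞) U := hu
  set L : EuclideanSpace ℝ (Fin (l+1)) →L[ℝ] EuclideanSpace ℝ (Fin (l+1)) :=
    LinearMap.toContinuousLinearMap Λ with hLdef
  have hLeq : ∀ w, Λ w = L w := fun _ => rfl
  have hL0 : ∀ v, ⟪v, L v⟫_ℝ = 0 := by
    intro v
    have h := hΛ v v
    rw [real_inner_comm] at h
    have : ⟪v, Λ v⟫_ℝ = 0 := by linarith
    rw [← hLeq]; exact this
  set v0 : ℝ × EuclideanSpace ℝ (Fin n) := ((1 : ℝ), (0 : EuclideanSpace ℝ (Fin n)))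
    with hv0
  -- representations of the derivatives via jointly smooth directional derivatives
  have hut : ∀ s y, ut u s y = DD v0 U (s, y) := fun s y => deriv_slice hU s y
  have hutt : ∀ y, utt u t y = DD v0 (DD v0 U) (t, y) := by
    intro y
    have h : (fun s => ut u s y) = fun s => DD v0 U (s, y) := funext fun s => hut s y
    show deriv (fun s => ut u s y) t = _
    rw [h]
    exact deriv_slice (DD_contDiff hU) t y
  have hpd : ∀ i y, pd (u t) i y = DD (ee i) U (t, y) := fun i y => pd_slice hU t i y
  have hlap : ∀ y, lap (u t) y = Lp U (t, y) := by
    intro y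
    unfold lap Lp
    refine Finset.sum_congr rfl fun i _ => ?_
    have h : pd (u t) i = fun y' => DD (ee i) U (t, y') := funext fun y' => hpd i y'
    rw [h]
    exact pd_slice (DD_contDiff hU) t i y
  have hlapF : lap (u t) = fun y => Lp U (t, y) := funext hlap
  have hlap2 : ∀ y, lap (lap (u t)) y = ∑ j, DD (ee j) (DD (ee j) (Lp U)) (t, y) := by
    intro y
    rw [hlapF]
    unfold lap
    refine Finset.sum_congr rfl fun j _ => ?_
    have h : pd (fun y' => Lp U (t, y')) j = fun y' => DD (ee j) (Lp U) (t, y') :=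
      funext fun y' => pd_slice (Lp_contDiff hU) t j y'
    rw [h]
    exact pd_slice (DD_contDiff (Lp_contDiff hU)) t j y
  -- rewrite the goal in terms of `L`
  simp only [hLeq]
  -- Term 1
  have hT1 : deriv (fun s => ⟪ut u s x, L (u s x)⟫_ℝ) t
      = ⟪DD v0 (DD v0 U) (t, x), L (U (t, x))⟫_ℝ
        + ⟪DD v0 U (t, x), L (DD v0 U (t, x))⟫_ℝ := by
    have e1 : (fun s => ⟪ut u s x, L (u s x)⟫_ℝ)
        = fun s => ⟪DD v0 U (s, x), L (U (s, x))⟫_ℝ :=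
      funext fun s => by rw [hut s x]
    rw [e1]
    exact deriv_inner_slice (DD_contDiff hU) hU L t x
  -- Term 2
  have hT2 : lap (fun y => ⟪lap (u t) y, L (u t y)⟫_ℝ) x
      = ∑ j, ((⟪DD (ee j) (DD (ee j) (Lp U)) (t, x), L (U (t, x))⟫_ℝ
          + ⟪DD (ee j) (Lp U) (t, x), L (DD (ee j) U (t, x))⟫_ℝ)
        + (⟪DD (ee j) (Lp U) (t, x), L (DD (ee j) U (t, x))⟫_ℝ
          + ⟪Lp U (t, x), L (DD (ee j) (DD (ee j) U) (t, x))⟫_ℝ)) := by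
    have e2 : (fun y => ⟪lap (u t) y, L (u t y)⟫_ℝ)
        = fun y => ⟪Lp U (t, y), L (U (t, y))⟫_ℝ :=
      funext fun y => by rw [hlap y]
    rw [e2]
    unfold lap
    refine Finset.sum_congr rfl fun j _ => ?_
    have h3 : pd (fun y => ⟪Lp U (t, y), L (U (t, y))⟫_ℝ) j
        = fun y => ⟪DD (ee j) (Lp U) (t, y), L (U (t, y))⟫_ℝ
          + ⟪Lp U (t, y), L (DD (ee j) U (t, y))⟫_ℝ :=
      funext fun y => pd_inner_slice (Lp_contDiff hU) hU L t j y
    rw [h3]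
    exact pd_inner_add_slice (DD_contDiff (Lp_contDiff hU)) hU
      (Lp_contDiff hU) (DD_contDiff hU) L t j x
  -- Term 3
  have hT3 : ∀ i, pd (fun y => ⟪lap (u t) y, L (pd (u t) i y)⟫_ℝ) i x
      = ⟪DD (ee i) (Lp U) (t, x), L (DD (ee i) U (t, x))⟫_ℝ
        + ⟪Lp U (t, x), L (DD (ee i) (DD (ee i) U) (t, x))⟫_ℝ := by
    intro i
    have e3 : (fun y => ⟪lap (u t) y, L (pd (u t) i y)⟫_ℝ)
        = fun y => ⟪Lp U (t, y), L (DD (ee i) U (t, y))⟫_ℝ :=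
      funext fun y => by rw [hlap y, hpd i y]
    rw [e3]
    exact pd_inner_slice (Lp_contDiff hU) (DD_contDiff hU) L t i x
  have hT3' : (∑ i, pd (fun y => ⟪lap (u t) y, L (pd (u t) i y)⟫_ℝ) i x)
      = ∑ i, (⟪DD (ee i) (Lp U) (t, x), L (DD (ee i) U (t, x))⟫_ℝ
        + ⟪Lp U (t, x), L (DD (ee i) (DD (ee i) U) (t, x))⟫_ℝ) :=
    Finset.sum_congr rfl fun i _ => hT3 i
  rw [hT1, hT2, hT3']
  -- now pure algebra with inner products
  have hQ : ⟪DD v0 U (t, x), L (DD v0 U (t, x))⟫_ℝ = 0 := hL0 _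
  have hA : (∑ j, ⟪DD (ee j) (DD (ee j) (Lp U)) (t, x), L (U (t, x))⟫_ℝ)
      = ⟪Lp (Lp U) (t, x), L (U (t, x))⟫_ℝ := (sum_inner _ _ _).symm
  have hC : (∑ j, ⟪Lp U (t, x), L (DD (ee j) (DD (ee j) U) (t, x))⟫_ℝ) = 0 := by
    rw [← inner_sum, ← map_sum]
    have h : (∑ j, DD (ee j) (DD (ee j) U) (t, x)) = Lp U (t, x) := rfl
    rw [h]
    exact hL0 _
  obtain ⟨c, hc⟩ := hperp t ht x
  rw [hutt x] at hc
  have hc2 : lap (lap (u t)) x = Lp (Lp U) (t, x) := hlap2 x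
  rw [hc2] at hc
  have hPerp : ⟪DD v0 (DD v0 U) (t, x), L (U (t, x))⟫_ℝ
      + ⟪Lp (Lp U) (t, x), L (U (t, x))⟫_ℝ = 0 := by
    rw [← inner_add_left, hc]
    have : (c • u t x : EuclideanSpace ℝ (Fin (l+1))) = c • U (t, x) := rfl
    rw [this, real_inner_smul_left, hL0, mul_zero]
  rw [Finset.sum_add_distrib, Finset.sum_add_distrib, Finset.sum_add_distrib, hA, hC, hQ]
  linarith
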